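/- Let S be a reduced set of paths of length at least 2 in a finite quiver Q and let n ≥ 1. For a path w and a path v₀ of positive length, the pair (w, v₀) belongs to QO_n(S) if and only if w can be written as w = u₁v₁u₂⋯u_{n−1}v_{n−1}u_nv_n where u₁,…,u_n are paths, v₁,…,v_{n−1} have positive length, v_n is a vertex, such that: (1) v_{i−1}u_iv_i ∈ S for 1 ≤ i ≤ n; (2) for 1 ≤ i ≤ n−1 there are no paths u, v of positive length with vv_iu ∈ S, u a left divisor of u_{i+1}v_{i+1}, and v a right divisor of u_i; and (3) u₁ has positive length if n = 1. -/

import Mathlib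

universe u v

/-! Combinatorics of paths in a quiver: divisibility, overlaps, quasioverlaps. -/

/-- The type of all paths in a quiver `V`, bundled with their endpoints. -/
abbrev PathIn (V : Type u) [Quiver.{v + 1} V] : Type (max u (v + 1)) :=
  Σ a b : V, Quiver.Path a b

namespace PathIn

variable {V : Type u} [Quiver.{v + 1} V]

/-- Source of a bundled path. -/
def src (p : PathIn V) : V := p.1

/-- Target of a bundled path. -/
def tgt (p : PathIn V) : V := p.2.1

/-- Length of a bundled path. -/
def len (p : PathIn V) : ℕ := p.2.2.length

/-- The path of length zero at a vertex. -/
def vert (a : V) : PathIn V := ⟨a, a, Quiver.Path.nil⟩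

/-- Concatenation of bundled paths (junk value `p` if the endpoints do not match). -/
noncomputable def comp (p q : PathIn V) : PathIn V :=
  open Classical in
  if h : p.tgt = q.src then ⟨p.1, q.2.1, p.2.2.comp (q.2.2.cast h.symm rfl)⟩ else p

/-- `LDiv p q` : `p` divides `q` on the left, i.e. `q = p v` for some path `v`. -/
def LDiv (p q : PathIn V) : Prop :=
  ∃ v : PathIn V, p.tgt = v.src ∧ q = p.comp v

/-- `RDiv p q` : `p` divides `q` on the right, i.e. `q = u p` for some path `u`. -/
def RDiv (p q : PathIn V) : Prop :=
  ∃ u : PathIn V, u.tgt = p.src ∧ q = u.comp p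

/-- `Div p q` : `p` divides `q`, i.e. `q = u p v` for some paths `u, v`. -/
def Div (p q : PathIn V) : Prop :=
  ∃ u v : PathIn V, u.tgt = p.src ∧ p.tgt = v.src ∧ q = (u.comp p).comp v

/-- A set of paths is reduced if no element of it properly divides another element. -/
def Reduced (S : Set (PathIn V)) : Prop :=
  ∀ q ∈ S, ∀ p ∈ S, p ≠ q → ¬ Div p q

/-- `p` is an `S`-path if some element of `S` divides it on the right. -/
def IsSPath (S : Set (PathIn V)) (p : PathIn V) : Prop :=
  ∃ s ∈ S, RDiv s p

/-- `q` `S`-vanishes `p` (written `q ∣_S p`): `p = q u` where no element of `S` divides `u`. -/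
def SVan (S : Set (PathIn V)) (q p : PathIn V) : Prop :=
  ∃ u : PathIn V, q.tgt = u.src ∧ p = q.comp u ∧ ∀ s ∈ S, ¬ Div s u

/-- `q` almost `S`-vanishes `p` (written `q ∣_S^a p`): `p = q u`, `q` does not `S`-vanish `p`,
and for every factorization `u = u₁ u₂` with `u₂` of positive length, `q` `S`-vanishes `q u₁`. -/
def ASVan (S : Set (PathIn V)) (q p : PathIn V) : Prop :=
  ∃ u : PathIn V, q.tgt = u.src ∧ p = q.comp u ∧ ¬ SVan S q p ∧
    ∀ u₁ u₂ : PathIn V, u₁.tgt = u₂.src → u = u₁.comp u₂ → 0 < u₂.len →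
      SVan S q (q.comp u₁)

/-- The set of `n`-overlaps of a set of paths `S`. -/
def Overlaps (S : Set (PathIn V)) : ℕ → Set (PathIn V)
  | 0 => {p | p.len = 1}
  | 1 => S
  | (n + 2) => {w | ∃ w₁ ∈ Overlaps S (n + 1), ∃ w₂ ∈ Overlaps S n,
      SVan S w₁ w ∧ ASVan S w₂ w}

/-- The set of `n`-quasioverlaps of a set of paths `S`: pairs `(w, v)` with `v` of
positive length. -/
def QOverlaps (S : Set (PathIn V)) : ℕ → Set (PathIn V × PathIn V)
  | 0 => {wv | wv.1.len = 0 ∧ 0 < wv.2.len ∧ wv.2.tgt = wv.1.src}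
  | 1 => {wv | 0 < wv.1.len ∧ 0 < wv.2.len ∧ wv.2.tgt = wv.1.src ∧ wv.2.comp wv.1 ∈ S}
  | (n + 2) => {wv | ∃ w₁, (w₁, wv.2) ∈ QOverlaps S (n + 1) ∧
      ∃ w₂, (w₂, wv.2) ∈ QOverlaps S n ∧ SVan S w₁ wv.1 ∧ ASVan S w₂ wv.1}

/-- `sup` of the lengths of the `n`-overlaps of `S`, in `EReal` (`-∞` if there are none). -/
noncomputable def maxo (S : Set (PathIn V)) (n : ℕ) : EReal :=
  sSup ((fun w => (w.len : EReal)) '' Overlaps S n)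

/-- `inf` of the lengths of the `n`-overlaps of `S`, in `EReal` (`+∞` if there are none). -/
noncomputable def mino (S : Set (PathIn V)) (n : ℕ) : EReal :=
  sInf ((fun w => (w.len : EReal)) '' Overlaps S n)

/-- `sup` of the lengths of the first components of `n`-quasioverlaps of `S`. -/
noncomputable def maxqo (S : Set (PathIn V)) (n : ℕ) : EReal :=
  sSup ((fun w => (w.len : EReal)) '' {w | ∃ v, (w, v) ∈ QOverlaps S n})

/-- `inf` of the lengths of the first components of `n`-quasioverlaps of `S`. -/
noncomputable def minqo (S : Set (PathIn V)) (n : ℕ) : EReal :=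
  sInf ((fun w => (w.len : EReal)) '' {w | ∃ v, (w, v) ∈ QOverlaps S n})

end PathIn

namespace PathIn

variable {V : Type u} [Quiver.{v + 1} V]

/-- Composition of the sequence of paths `p 0, p 1, ..., p n` (in word order). -/
noncomputable def compSeq (p : ℕ → PathIn V) : ℕ → PathIn V
  | 0 => p 0
  | (n + 1) => (compSeq p n).comp (p (n + 1))

end PathIn

namespace PathIn

variable {V : Type u} [Quiver.{v + 1} V]

/-- The conditions (1) and (2) of Lemmas `partition_o`/`partition_qo` on an interleaved
sequence of paths `q 0 = v₀, q 1 = u₁, q 2 = v₁, ..., q (2n-1) = u_n, q (2n) = v_n`. -/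
def FactorConds (S : Set (PathIn V)) (n : ℕ) (q : ℕ → PathIn V) : Prop :=
  -- consecutive pieces are composable
  (∀ i < 2 * n, (q i).tgt = (q (i + 1)).src) ∧
  -- `v_n` is a vertex
  (q (2 * n)).len = 0 ∧
  -- `v_1, ..., v_{n-1}` have positive length
  (∀ i, 1 ≤ i → i ≤ n - 1 → 0 < (q (2 * i)).len) ∧
  -- condition (1): `v_{i-1} u_i v_i ∈ S` for `1 ≤ i ≤ n`
  (∀ i, 1 ≤ i → i ≤ n →
    ((q (2 * i - 2)).comp ((q (2 * i - 1)).comp (q (2 * i)))) ∈ S) ∧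
  -- condition (2): for `1 ≤ i ≤ n - 1`, there are no paths `uu, vv` of positive length with
  -- `vv v_i uu ∈ S`, `uu` dividing `u_{i+1} v_{i+1}` on the left and `vv` dividing `u_i`
  -- on the right
  (∀ i, 1 ≤ i → i ≤ n - 1 → ¬ ∃ uu vv : PathIn V, 0 < uu.len ∧ 0 < vv.len ∧
      vv.tgt = (q (2 * i)).src ∧ (q (2 * i)).tgt = uu.src ∧
      (vv.comp ((q (2 * i)).comp uu)) ∈ S ∧
      PathIn.LDiv uu ((q (2 * i + 1)).comp (q (2 * i + 2))) ∧
      PathIn.RDiv vv (q (2 * i - 1)))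

end PathIn

/-!
Record an occurrence of an element of `S` in `W = v₀ w` by its interval of positions `[x, y)`;
as `S` is reduced, no such interval contains another. By induction on `n`, `(w, v₀)` is an
`n`-quasioverlap iff the occurrences contain a chain `[α 1, β 1), …, [α n, β n)` with `α 1 = 0`,
`β 0 = |v₀|`, `β n = |W|`, the `(i + 1)`-st interval starting in `[β (i - 1), β i)`, and no
occurrence straddling from `[β (i - 1), α (i + 1))` to `(β i, β (i + 1)]`. In the inductive step
`w₁ ∣_S w` says that no occurrence starts after `w₁`, and `w₂ ∣_S^a w` that the occurrences
starting after `w₂` exist and all end at the end of `w`; the chains of `w₁` and `w₂` agree because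
each interval of a chain is forced by the two before it. Cutting `W` at
`α 1 ≤ β 0 ≤ α 2 ≤ β 1 ≤ ⋯ ≤ α n ≤ β (n - 1) ≤ β n` gives `v₀, u₁, v₁, …, u_n, v_n`, and the
chain conditions become conditions (1)–(3).
-/

namespace Quiver.Path

variable {V : Type u} [Quiver.{v + 1} V]

def arrows {a : V} : ∀ {b : V}, Quiver.Path a b → List (Σ a b : V, a ⟶ b)
  | _, nil => []
  | _, cons p e => p.arrows ++ [⟨_, _, e⟩]

@[simp] theorem arrows_nil (a : V) : (nil : Quiver.Path a a).arrows = [] := rfl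

@[simp] theorem arrows_cons {a b c : V} (p : Quiver.Path a b) (e : b ⟶ c) :
    (p.cons e).arrows = p.arrows ++ [⟨_, _, e⟩] := rfl

@[simp] theorem length_arrows {a b : V} (p : Quiver.Path a b) : p.arrows.length = p.length := by
  induction p with
  | nil => rfl
  | cons p e ih => simp [ih]

@[simp] theorem arrows_comp {a b c : V} (p : Quiver.Path a b) (q : Quiver.Path b c) :
    (p.comp q).arrows = p.arrows ++ q.arrows := by
  induction q with
  | nil => simp
  | cons q e ih => simp [ih]

@[simp] theorem arrows_cast {a a' b b' : V} (ha : a = a') (hb : b = b') (p : Quiver.Path a b) :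
    (p.cast ha hb).arrows = p.arrows := by
  subst ha hb; rfl

theorem eq_of_arrows_eq {a : V} : ∀ {b c : V} (p : Quiver.Path a b) (q : Quiver.Path a c),
    p.arrows = q.arrows → b = c ∧ HEq p q
  | _, _, nil, nil, _ => ⟨rfl, .rfl⟩
  | _, _, nil, cons q f, h => by simp at h
  | _, _, cons p e, nil, h => by simp at h
  | _, _, cons p e, cons q f, h => by
    obtain ⟨hpq, hef⟩ := List.append_inj' h rfl
    obtain ⟨rfl, hpq⟩ := eq_of_arrows_eq p q hpq
    cases eq_of_heq hpq
    simp only [List.cons.injEq, Sigma.mk.injEq, and_true, true_and] at hef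
    obtain ⟨rfl, hef⟩ := Sigma.mk.inj_iff.mp (eq_of_heq hef)
    cases eq_of_heq hef
    exact ⟨rfl, .rfl⟩

end Quiver.Path

namespace PathIn

variable {V : Type u} [Quiver.{v + 1} V]

def arrows (p : PathIn V) : List (Σ a b : V, a ⟶ b) := p.2.2.arrows

theorem len_eq_length_arrows (p : PathIn V) : p.len = p.arrows.length :=
  (Quiver.Path.length_arrows _).symm

theorem ext_arrows {p q : PathIn V} (hsrc : p.src = q.src) (h : p.arrows = q.arrows) :
    p = q := by
  obtain ⟨a, b, p⟩ := p
  obtain ⟨a', b', q⟩ := q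
  cases hsrc
  obtain ⟨rfl, h⟩ := Quiver.Path.eq_of_arrows_eq p q h
  cases eq_of_heq h
  rfl

theorem comp_of_tgt_eq {p q : PathIn V} (h : p.tgt = q.src) :
    p.comp q = ⟨p.1, q.2.1, p.2.2.comp (q.2.2.cast h.symm rfl)⟩ :=
  dif_pos h

theorem src_comp {p q : PathIn V} (h : p.tgt = q.src) : (p.comp q).src = p.src := by
  rw [comp_of_tgt_eq h]; rfl

theorem tgt_comp {p q : PathIn V} (h : p.tgt = q.src) : (p.comp q).tgt = q.tgt := by
  rw [comp_of_tgt_eq h]; rfl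

theorem arrows_comp {p q : PathIn V} (h : p.tgt = q.src) :
    (p.comp q).arrows = p.arrows ++ q.arrows := by
  rw [comp_of_tgt_eq h]
  exact (Quiver.Path.arrows_comp _ _).trans
    (congrArg (p.arrows ++ ·) (Quiver.Path.arrows_cast _ _ _))

theorem len_comp {p q : PathIn V} (h : p.tgt = q.src) : (p.comp q).len = p.len + q.len := by
  simp only [len_eq_length_arrows, arrows_comp h, List.length_append]

theorem comp_assoc {p q r : PathIn V} (h₁ : p.tgt = q.src) (h₂ : q.tgt = r.src) :
    (p.comp q).comp r = p.comp (q.comp r) := by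
  have h₁₂ : (p.comp q).tgt = r.src := (tgt_comp h₁).trans h₂
  have h₂₁ : p.tgt = (q.comp r).src := h₁.trans (src_comp h₂).symm
  refine ext_arrows ?_ ?_
  · rw [src_comp h₁₂, src_comp h₁, src_comp h₂₁]
  · rw [arrows_comp h₁₂, arrows_comp h₁, arrows_comp h₂₁, arrows_comp h₂, List.append_assoc]

@[simp] theorem arrows_vert (a : V) : (vert a).arrows = [] := rfl

theorem comp_vert (p : PathIn V) : p.comp (vert p.tgt) = p :=
  ext_arrows (src_comp rfl) (by rw [arrows_comp rfl, arrows_vert, List.append_nil])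

theorem vert_comp (p : PathIn V) : (vert p.src).comp p = p :=
  ext_arrows (src_comp rfl) (by rw [arrows_comp rfl, arrows_vert, List.nil_append])

theorem comp_inj {p q p' q' : PathIn V} (h : p.tgt = q.src) (h' : p'.tgt = q'.src)
    (e : p.comp q = p'.comp q') (hlen : p.len = p'.len) : p = p' ∧ q = q' := by
  have harr := congrArg arrows e
  rw [arrows_comp h, arrows_comp h'] at harr
  obtain ⟨hp, hq⟩ := List.append_inj harr
    (by rw [← len_eq_length_arrows, ← len_eq_length_arrows, hlen])
  have hsrc : p.src = p'.src := by rw [← src_comp h, ← src_comp h', e]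
  have hpp' : p = p' := ext_arrows hsrc hp
  refine ⟨hpp', ext_arrows ?_ hq⟩
  rw [← h, ← h', hpp']

theorem exists_eq_comp (W : PathIn V) {m : ℕ} (hm : m ≤ W.len) :
    ∃ p q : PathIn V, p.tgt = q.src ∧ W = p.comp q ∧ p.len = m := by
  obtain ⟨c, p, q, hW, hp⟩ := W.2.2.exists_eq_comp_of_le_length hm
  refine ⟨⟨W.1, c, p⟩, ⟨c, W.2.1, q⟩, rfl, ?_, hp⟩
  rw [comp_of_tgt_eq rfl]
  exact Sigma.ext rfl (heq_of_eq (Sigma.ext rfl (heq_of_eq hW)))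

theorem exists_eq_comp_comp (W : PathIn V) {x y : ℕ} (hxy : x ≤ y) (hy : y ≤ W.len) :
    ∃ B A C : PathIn V, A.tgt = B.src ∧ B.tgt = C.src ∧ W = A.comp (B.comp C) ∧
      A.len = x ∧ B.len = y - x := by
  obtain ⟨P, C, hPC, rfl, hP⟩ := W.exists_eq_comp hy
  obtain ⟨A, B, hAB, rfl, hA⟩ := P.exists_eq_comp (hP ▸ hxy : x ≤ P.len)
  rw [tgt_comp hAB] at hPC
  refine ⟨B, A, C, hAB, hPC, comp_assoc hAB hPC, hA, ?_⟩
  rw [len_comp hAB] at hP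
  omega

/-- The arrows of `W` in positions `[x, y)`; junk unless `x ≤ y ≤ W.len`. -/
noncomputable def seg (W : PathIn V) (x y : ℕ) : PathIn V :=
  open Classical in
  if h : x ≤ y ∧ y ≤ W.len then (W.exists_eq_comp_comp h.1 h.2).choose else W

section Seg

variable {W : PathIn V} {x y z : ℕ}

theorem seg_spec (hxy : x ≤ y) (hy : y ≤ W.len) :
    ∃ A C : PathIn V, A.tgt = (W.seg x y).src ∧ (W.seg x y).tgt = C.src ∧
      W = A.comp ((W.seg x y).comp C) ∧ A.len = x ∧ (W.seg x y).len = y - x := by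
  rw [seg, dif_pos ⟨hxy, hy⟩]
  exact (W.exists_eq_comp_comp hxy hy).choose_spec

theorem len_seg (hxy : x ≤ y) (hy : y ≤ W.len) : (W.seg x y).len = y - x := by
  obtain ⟨-, -, -, -, -, -, h⟩ := seg_spec hxy hy
  exact h

theorem eq_seg_of_eq_comp_comp {A B C : PathIn V} (hAB : A.tgt = B.src) (hBC : B.tgt = C.src)
    (e : W = A.comp (B.comp C)) (hx : A.len = x) (hy : A.len + B.len = y) : B = W.seg x y := by
  have hABC : A.tgt = (B.comp C).src := hAB.trans (src_comp hBC).symm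
  have hW : W.len = A.len + (B.len + C.len) := by rw [e, len_comp hABC, len_comp hBC]
  obtain ⟨A', C', hA', hC', e', hxA', hlen'⟩ := seg_spec (W := W) (x := x) (y := y)
    (by omega) (by omega)
  have hA'S : A'.tgt = ((W.seg x y).comp C').src := hA'.trans (src_comp hC').symm
  obtain ⟨-, hBC'⟩ := comp_inj hABC hA'S (e.symm.trans e') (hx.trans hxA'.symm)
  exact (comp_inj hBC hC' hBC' (by omega)).1

theorem eq_seg_of_eq_comp_left {P R : PathIn V} (h : P.tgt = R.src) (e : W = P.comp R) :
    P = W.seg 0 P.len :=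
  eq_seg_of_eq_comp_comp (B := P) (C := R) (A := vert P.src) rfl h
    (by rw [← src_comp h, vert_comp]; exact e) rfl (Nat.zero_add _)

theorem eq_seg_of_eq_comp_right {P R : PathIn V} (h : P.tgt = R.src) (e : W = P.comp R) :
    R = W.seg P.len W.len := by
  refine eq_seg_of_eq_comp_comp (A := P) (C := vert R.tgt) h rfl (by rw [comp_vert]; exact e)
    rfl ?_
  rw [e, len_comp h]

theorem eq_seg_of_eq_comp {v₀ w w' u : PathIn V} (hv₀ : v₀.tgt = w'.src) (hu : w'.tgt = u.src)
    (e : w = w'.comp u) :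
    v₀.len + w'.len ≤ (v₀.comp w).len ∧ w' = (v₀.comp w).seg v₀.len (v₀.len + w'.len) := by
  have hvw : v₀.tgt = w.src := by rw [e, src_comp hu]; exact hv₀
  refine ⟨?_, eq_seg_of_eq_comp_comp hv₀ hu (by rw [e]) rfl rfl⟩
  rw [len_comp hvw, e, len_comp hu]
  omega

theorem seg_zero_len (W : PathIn V) : W.seg 0 W.len = W :=
  (eq_seg_of_eq_comp_left (R := vert W.tgt) rfl (comp_vert W).symm).symm

theorem tgt_seg_eq_src_seg_and_comp (hxy : x ≤ y) (hyz : y ≤ z) (hz : z ≤ W.len) :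
    (W.seg x y).tgt = (W.seg y z).src ∧ (W.seg x y).comp (W.seg y z) = W.seg x z := by
  obtain ⟨A, C, hA, hC, e, hx, hlen⟩ := seg_spec (hxy.trans hyz) hz
  obtain ⟨B₁, B₂, h₁₂, hB, hB₁⟩ := (W.seg x z).exists_eq_comp (m := y - x) (by omega)
  rw [hB] at hA hC e hlen
  rw [src_comp h₁₂] at hA
  rw [tgt_comp h₁₂] at hC
  rw [len_comp h₁₂] at hlen
  have e₁ : W = A.comp (B₁.comp (B₂.comp C)) := by rw [e, comp_assoc h₁₂ hC]
  have hAB₁ : (A.comp B₁).tgt = B₂.src := (tgt_comp hA).trans h₁₂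
  have e₂ : W = (A.comp B₁).comp (B₂.comp C) := by
    rw [comp_assoc hA (h₁₂.trans (src_comp hC).symm)]; exact e₁
  have hB₁x : B₁ = W.seg x y :=
    eq_seg_of_eq_comp_comp hA (h₁₂.trans (src_comp hC).symm) e₁ hx (by omega)
  have hB₂y : B₂ = W.seg y z :=
    eq_seg_of_eq_comp_comp hAB₁ hC e₂ (by rw [len_comp hA]; omega) (by rw [len_comp hA]; omega)
  rw [← hB₁x, ← hB₂y]
  exact ⟨h₁₂, hB.symm⟩

theorem seg_comp_seg (hxy : x ≤ y) (hyz : y ≤ z) (hz : z ≤ W.len) :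
    (W.seg x y).comp (W.seg y z) = W.seg x z :=
  (tgt_seg_eq_src_seg_and_comp hxy hyz hz).2

theorem tgt_seg_eq_src_seg (hxy : x ≤ y) (hyz : y ≤ z) (hz : z ≤ W.len) :
    (W.seg x y).tgt = (W.seg y z).src :=
  (tgt_seg_eq_src_seg_and_comp hxy hyz hz).1

theorem seg_eq_seg_of_eq_comp {P R : PathIn V} (h : P.tgt = R.src) (e : W = P.comp R)
    (hxy : x ≤ y) (hy : y ≤ P.len) : P.seg x y = W.seg x y := by
  obtain ⟨A, C, hA, hC, eP, hx, hlen⟩ := seg_spec hxy hy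
  rw [eP] at h e
  rw [tgt_comp (hA.trans (src_comp hC).symm), tgt_comp hC] at h
  refine eq_seg_of_eq_comp_comp hA (hC.trans (src_comp h).symm) ?_ hx (by omega)
  rw [e, comp_assoc (hA.trans (src_comp hC).symm) (by rwa [tgt_comp hC]), comp_assoc hC h]

theorem seg_seg {c d : ℕ} (hcd : c ≤ d) (hd : d ≤ W.len) (hxy : x ≤ y) (hy : y ≤ d - c) :
    (W.seg c d).seg x y = W.seg (c + x) (c + y) := by
  obtain ⟨A, C, hA, hC, e, hc, -⟩ := seg_spec hcd hd
  have hlen := len_seg hcd hd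
  obtain ⟨A', C', hA', hC', e', hx, hlen'⟩ := seg_spec (W := W.seg c d) hxy (by omega)
  generalize (W.seg c d).seg x y = S at *
  generalize W.seg c d = B at *
  subst e'
  have hAS : A'.tgt = (S.comp C').src := hA'.trans (src_comp hC').symm
  rw [src_comp hAS] at hA
  rw [tgt_comp hAS, tgt_comp hC'] at hC
  have hSC : S.tgt = (C'.comp C).src := hC'.trans (src_comp hC).symm
  refine eq_seg_of_eq_comp_comp (A := A.comp A') (C := C'.comp C) ((tgt_comp hA).trans hA')
    hSC ?_ (by rw [len_comp hA]; omega) (by rw [len_comp hA]; omega)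
  rw [e, comp_assoc hA (hA'.trans (src_comp hSC).symm), comp_assoc hAS (by rwa [tgt_comp hC']),
    comp_assoc hC' hC]

theorem div_seg_iff {c d : ℕ} (hcd : c ≤ d) (hd : d ≤ W.len) {s : PathIn V} :
    Div s (W.seg c d) ↔ ∃ x y, c ≤ x ∧ x ≤ y ∧ y ≤ d ∧ s = W.seg x y := by
  have hlen := len_seg hcd hd
  constructor
  · rintro ⟨u, v, hu, hv, e⟩
    rw [comp_assoc hu hv] at e
    have hs := eq_seg_of_eq_comp_comp hu hv e rfl rfl
    have hsv : s.tgt = v.src := hv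
    rw [e, len_comp (hu.trans (src_comp hsv).symm), len_comp hv] at hlen
    rw [seg_seg hcd hd (Nat.le_add_right _ _) (by omega)] at hs
    exact ⟨_, _, by omega, by omega, by omega, hs⟩
  · rintro ⟨x, y, hcx, hxy, hyd, rfl⟩
    obtain ⟨h₁, e₁⟩ := tgt_seg_eq_src_seg_and_comp (W := W) hcx hxy (hyd.trans hd)
    obtain ⟨h₂, e₂⟩ := tgt_seg_eq_src_seg_and_comp (W := W) (hcx.trans hxy) hyd hd
    refine ⟨W.seg c x, W.seg y d, h₁, tgt_seg_eq_src_seg hxy hyd hd, ?_⟩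
    rw [e₁, e₂]

theorem eq_seg_of_lDiv {c d : ℕ} (hcd : c ≤ d) (hd : d ≤ W.len) {u : PathIn V}
    (h : LDiv u (W.seg c d)) : c + u.len ≤ d ∧ u = W.seg c (c + u.len) := by
  obtain ⟨v, huv, e⟩ := h
  have hlen := len_seg hcd hd
  rw [e, len_comp huv] at hlen
  have hu := eq_seg_of_eq_comp_left huv e
  rw [seg_seg hcd hd (Nat.zero_le _) (by omega), Nat.add_zero] at hu
  exact ⟨by omega, hu⟩

theorem eq_seg_of_rDiv {c d : ℕ} (hcd : c ≤ d) (hd : d ≤ W.len) {v : PathIn V}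
    (h : RDiv v (W.seg c d)) : v.len ≤ d - c ∧ v = W.seg (d - v.len) d := by
  obtain ⟨u, huv, e⟩ := h
  have hlen := len_seg hcd hd
  rw [e, len_comp huv] at hlen
  have hv := eq_seg_of_eq_comp_right huv e
  rw [len_seg hcd hd, seg_seg hcd hd (by omega) le_rfl, show c + u.len = d - v.len by omega,
    show c + (d - c) = d by omega] at hv
  exact ⟨by omega, hv⟩

theorem compSeq_seg {b : ℕ → ℕ} (hb : Monotone b) {N : ℕ} (hbW : b (N + 1) ≤ W.len) :
    compSeq (fun k => W.seg (b k) (b (k + 1))) N = W.seg (b 0) (b (N + 1)) := by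
  induction N with
  | zero => rfl
  | succ N ih =>
    rw [compSeq, ih ((hb (N + 1).le_succ).trans hbW)]
    exact seg_comp_seg (hb (Nat.zero_le _)) (hb (N + 1).le_succ) hbW

end Seg

section CompSeq

variable {q : ℕ → PathIn V}

theorem src_compSeq_and_tgt_compSeq {N : ℕ} (hq : ∀ k < N, (q k).tgt = (q (k + 1)).src) :
    (compSeq q N).src = (q 0).src ∧ (compSeq q N).tgt = (q N).tgt := by
  induction N with
  | zero => exact ⟨rfl, rfl⟩
  | succ N ih =>
    obtain ⟨hsrc, htgt⟩ := ih fun k hk => hq k (by omega)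
    have h : (compSeq q N).tgt = (q (N + 1)).src := htgt.trans (hq N (by omega))
    exact ⟨(src_comp h).trans hsrc, tgt_comp h⟩

theorem compSeq_succ {N : ℕ} (hq : ∀ k < N + 1, (q k).tgt = (q (k + 1)).src) :
    compSeq q (N + 1) = (q 0).comp (compSeq (fun m => q (m + 1)) N) := by
  induction N with
  | zero => rfl
  | succ N ih =>
    obtain ⟨hsrc, htgt⟩ := src_compSeq_and_tgt_compSeq (q := fun m => q (m + 1)) (N := N)
      fun k hk => hq (k + 1) (by omega)
    rw [compSeq, ih fun k hk => hq k (by omega)]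
    exact comp_assoc ((hq 0 (by omega)).trans hsrc.symm) (htgt.trans (hq (N + 1) (by omega)))

theorem eq_seg_compSeq {N : ℕ} (hq : ∀ k < N, (q k).tgt = (q (k + 1)).src) :
    (compSeq q N).len = ∑ j ∈ Finset.range (N + 1), (q j).len ∧
      ∀ k ≤ N, q k = (compSeq q N).seg (∑ j ∈ Finset.range k, (q j).len)
        (∑ j ∈ Finset.range (k + 1), (q j).len) := by
  induction N with
  | zero =>
    exact ⟨by simp [compSeq], fun k hk => by simp [show k = 0 by omega, compSeq, seg_zero_len]⟩
  | succ N ih =>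
    obtain ⟨hlen, hseg⟩ := ih fun k hk => hq k (by omega)
    have h : (compSeq q N).tgt = (q (N + 1)).src :=
      (src_compSeq_and_tgt_compSeq fun k hk => hq k (by omega)).2.trans (hq N (by omega))
    have hlen' : (compSeq q (N + 1)).len = ∑ j ∈ Finset.range (N + 2), (q j).len := by
      rw [compSeq, len_comp h, hlen, Finset.sum_range_succ _ (N + 1)]
    refine ⟨hlen', fun k hk => ?_⟩
    rcases hk.lt_or_eq with hk | rfl
    · have hle : ∑ j ∈ Finset.range (k + 1), (q j).len ≤ (compSeq q N).len :=
        hlen ▸ Finset.sum_le_sum_of_subset (Finset.range_subset_range.mpr (by omega))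
      rw [hseg k (by omega), seg_eq_seg_of_eq_comp h rfl
        (Finset.sum_le_sum_of_subset (Finset.range_subset_range.mpr k.le_succ)) hle]
      rfl
    · rw [eq_seg_of_eq_comp_right h rfl, hlen, ← compSeq, hlen']

end CompSeq

def OccursAt (S : Set (PathIn V)) (W : PathIn V) (x y : ℕ) : Prop :=
  x ≤ y ∧ y ≤ W.len ∧ W.seg x y ∈ S

def Nonnested (O : ℕ → ℕ → Prop) : Prop :=
  ∀ ⦃x y x' y'⦄, O x y → O x' y' → x' ≤ x → y ≤ y' → x = x' ∧ y = y'

theorem Reduced.nonnested_occursAt {S : Set (PathIn V)} (hred : Reduced S) (W : PathIn V) :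
    Nonnested (OccursAt S W) := by
  rintro x y x' y' ⟨hxy, hy, hS⟩ ⟨hxy', hy', hS'⟩ hx' hy''
  by_cases heq : W.seg x y = W.seg x' y'
  · have hlen := congrArg len heq
    rw [len_seg hxy hy, len_seg hxy' hy'] at hlen
    omega
  · exact absurd ((div_seg_iff hxy' hy').mpr ⟨x, y, hx', hxy, hy'', rfl⟩)
      (hred _ hS' _ hS heq)

theorem occursAt_seg_zero_iff {S : Set (PathIn V)} {W : PathIn V} {e x y : ℕ}
    (he : e ≤ W.len) : OccursAt S (W.seg 0 e) x y ↔ y ≤ e ∧ OccursAt S W x y := by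
  obtain ⟨h, hW⟩ := tgt_seg_eq_src_seg_and_comp (Nat.zero_le e) he le_rfl
  rw [seg_zero_len] at hW
  have hlen : (W.seg 0 e).len = e := by rw [len_seg (Nat.zero_le e) he]; rfl
  unfold OccursAt
  rw [hlen]
  constructor
  · rintro ⟨hxy, hye, hS⟩
    rw [seg_eq_seg_of_eq_comp h hW.symm hxy (by omega)] at hS
    exact ⟨hye, hxy, hye.trans he, hS⟩
  · rintro ⟨hye, hxy, -, hS⟩
    rw [← seg_eq_seg_of_eq_comp h hW.symm hxy (by omega)] at hS
    exact ⟨hxy, hye, hS⟩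

section Occurrences

variable {S : Set (PathIn V)} {W : PathIn V} {l b : ℕ}

theorem exists_straddle_iff {a c d e : ℕ} (hac : a ≤ c) (hcd : c ≤ d) (hde : d ≤ e)
    (he : e ≤ W.len) :
    (∃ uu vv : PathIn V, 0 < uu.len ∧ 0 < vv.len ∧ vv.tgt = (W.seg c d).src ∧
        (W.seg c d).tgt = uu.src ∧ vv.comp ((W.seg c d).comp uu) ∈ S ∧
        LDiv uu (W.seg d e) ∧ RDiv vv (W.seg a c)) ↔
      ∃ x y, a ≤ x ∧ x < c ∧ d < y ∧ y ≤ e ∧ OccursAt S W x y := by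
  constructor
  · rintro ⟨uu, vv, huu, hvv, -, -, hS, hl, hr⟩
    obtain ⟨hle, hu⟩ := eq_seg_of_lDiv hde he hl
    obtain ⟨hle', hv⟩ := eq_seg_of_rDiv hac (hcd.trans (hde.trans he)) hr
    rw [hu, hv, seg_comp_seg hcd (by omega) (by omega),
      seg_comp_seg (by omega) (by omega) (by omega)] at hS
    exact ⟨_, _, by omega, by omega, by omega, by omega, by omega, by omega, hS⟩
  · rintro ⟨x, y, hax, hxc, hdy, hye, hxy, -, hS⟩
    refine ⟨W.seg d y, W.seg x c, by rw [len_seg (by omega) (by omega)]; omega,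
      by rw [len_seg (by omega) (by omega)]; omega,
      tgt_seg_eq_src_seg hxc.le hcd (by omega), tgt_seg_eq_src_seg hcd hdy.le (by omega),
      ?_, ⟨W.seg y e, tgt_seg_eq_src_seg hdy.le hye he, (seg_comp_seg hdy.le hye he).symm⟩,
      ⟨W.seg a x, tgt_seg_eq_src_seg hax hxc.le (by omega),
        (seg_comp_seg hax hxc.le (by omega)).symm⟩⟩
    rwa [seg_comp_seg hcd hdy.le (by omega), seg_comp_seg hxc.le (by omega) (by omega)]

theorem sVan_seg_iff {c d : ℕ} (hlc : l ≤ c) (hcd : c ≤ d) (hd : d ≤ W.len) :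
    SVan S (W.seg l c) (W.seg l d) ↔ ∀ x y, c ≤ x → y ≤ d → ¬ OccursAt S W x y := by
  obtain ⟨h, e⟩ := tgt_seg_eq_src_seg_and_comp hlc hcd hd
  constructor
  · rintro ⟨u, hu, eu, hfree⟩ x y hcx hyd ⟨hxy, -, hS⟩
    obtain ⟨-, rfl⟩ := comp_inj h hu (e.trans eu) rfl
    exact hfree _ hS ((div_seg_iff hcd hd).mpr ⟨x, y, hcx, hxy, hyd, rfl⟩)
  · refine fun hno => ⟨W.seg c d, h, e.symm, fun s hs hdiv => ?_⟩
    obtain ⟨x, y, hcx, hxy, hyd, rfl⟩ := (div_seg_iff hcd hd).mp hdiv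
    exact hno x y hcx hyd ⟨hxy, hyd.trans hd, hs⟩

theorem aSVan_seg_iff_sVan (hlb : l ≤ b) (hb : b ≤ W.len) :
    ASVan S (W.seg l b) (W.seg l W.len) ↔ ¬ SVan S (W.seg l b) (W.seg l W.len) ∧
      ∀ e, b ≤ e → e < W.len → SVan S (W.seg l b) (W.seg l e) := by
  obtain ⟨h, e⟩ := tgt_seg_eq_src_seg_and_comp hlb hb le_rfl
  constructor
  · rintro ⟨u, hu, eu, hns, hall⟩
    obtain ⟨-, rfl⟩ := comp_inj h hu (e.trans eu) rfl
    refine ⟨hns, fun c hbc hc => ?_⟩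
    obtain ⟨h₁, e₁⟩ := tgt_seg_eq_src_seg_and_comp hbc hc.le le_rfl
    have hpos : 0 < (W.seg c W.len).len := by rw [len_seg hc.le le_rfl]; omega
    have hsv := hall _ _ h₁ e₁.symm hpos
    rwa [seg_comp_seg hlb hbc hc.le] at hsv
  · rintro ⟨hns, hall⟩
    refine ⟨W.seg b W.len, h, e.symm, hns, fun u₁ u₂ h₁₂ e₁₂ hpos => ?_⟩
    obtain ⟨hle, hu₁⟩ := eq_seg_of_lDiv hb le_rfl ⟨u₂, h₁₂, e₁₂⟩
    have hlen := len_seg (W := W) hb le_rfl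
    rw [e₁₂, len_comp h₁₂] at hlen
    rw [hu₁, seg_comp_seg hlb (Nat.le_add_right _ _) hle]
    exact hall _ (Nat.le_add_right _ _) (by omega)

theorem aSVan_seg_iff (hlb : l ≤ b) (hb : b ≤ W.len) :
    ASVan S (W.seg l b) (W.seg l W.len) ↔ (∃ x, b ≤ x ∧ OccursAt S W x W.len) ∧
      ∀ x y, b ≤ x → OccursAt S W x y → y = W.len := by
  rw [aSVan_seg_iff_sVan hlb hb, sVan_seg_iff hlb hb le_rfl]
  constructor
  · rintro ⟨hocc, hend⟩
    have hend' : ∀ x y, b ≤ x → OccursAt S W x y → y = W.len := by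
      intro x y hbx hxy
      by_contra hy
      have hyW : y < W.len := lt_of_le_of_ne hxy.2.1 hy
      exact (sVan_seg_iff hlb (hbx.trans hxy.1) hyW.le).mp (hend y (hbx.trans hxy.1) hyW)
        x y hbx le_rfl hxy
    push Not at hocc
    obtain ⟨x, y, hbx, -, hxy⟩ := hocc
    exact ⟨⟨x, hbx, hend' x y hbx hxy ▸ hxy⟩, hend'⟩
  · rintro ⟨⟨x, hbx, hx⟩, hend⟩
    refine ⟨fun hno => hno x _ hbx le_rfl hx, fun c hbc hc => ?_⟩
    rw [sVan_seg_iff hlb hbc hc.le]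
    intro x y hbx hyc hxy
    have := hend x y hbx hxy
    omega

end Occurrences

/-- With `O = OccursAt S (v₀ w)` and `l₀ = |v₀|`, a chain with `β n = |v₀ w|` is the shape of an
`n`-quasioverlap `(w, v₀)`: the `i`-th element of `S` of the factorization occupies the positions
`[α i, β i)` of `v₀ w`. -/
structure Chain (O : ℕ → ℕ → Prop) (l₀ n : ℕ) (α β : ℕ → ℕ) : Prop where
  alpha_one : α 1 = 0
  beta_zero : β 0 = l₀
  occ : ∀ i, 1 ≤ i → i ≤ n → O (α i) (β i)
  overlap : ∀ i, 1 ≤ i → i < n → β (i - 1) ≤ α (i + 1) ∧ α (i + 1) < β i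
  gap : ∀ i, 1 ≤ i → i < n → ∀ x y, β (i - 1) ≤ x → x < α (i + 1) → β i < y →
    y ≤ β (i + 1) → ¬ O x y
  one : n = 1 → l₀ < β 1

namespace Chain

variable {O : ℕ → ℕ → Prop} {l₀ n : ℕ} {α β : ℕ → ℕ}

theorem lt_beta_one (h : Chain O l₀ n α β) (hn : 1 ≤ n) : l₀ < β 1 := by
  rcases hn.eq_or_lt with rfl | hn
  · exact h.one rfl
  · have := h.overlap 1 le_rfl hn
    rw [Nat.sub_self, h.beta_zero] at this
    omega

theorem alpha_lt_alpha_succ (h : Chain O l₀ n α β) (hl₀ : 0 < l₀) {i : ℕ} (hi : 1 ≤ i)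
    (hin : i < n) : α i < α (i + 1) := by
  have hα := (h.overlap i hi hin).1
  rcases hi.eq_or_lt with rfl | hi
  · rw [h.alpha_one]
    rw [Nat.sub_self, h.beta_zero] at hα
    omega
  · have hβ := (h.overlap (i - 1) (by omega) (by omega)).2
    rw [Nat.sub_add_cancel hi.le] at hβ
    omega

theorem alpha_succ_lt_beta (h : Chain O l₀ n α β) (hl₀ : 0 < l₀) {i : ℕ} (hin : i < n) :
    α (i + 1) < β i := by
  rcases Nat.eq_zero_or_pos i with rfl | hi
  · rw [h.alpha_one, h.beta_zero]; exact hl₀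
  · exact (h.overlap i hi hin).2

theorem beta_lt_beta_succ (hO : Nonnested O) (h : Chain O l₀ n α β) (hl₀ : 0 < l₀) {i : ℕ}
    (hin : i < n) : β i < β (i + 1) := by
  rcases Nat.eq_zero_or_pos i with rfl | hi
  · rw [h.beta_zero]; exact h.lt_beta_one (by omega)
  by_contra hle
  have hα := h.alpha_lt_alpha_succ hl₀ hi hin
  have := hO (h.occ (i + 1) (by omega) hin) (h.occ i hi hin.le) hα.le (by omega)
  omega

theorem beta_mono (hO : Nonnested O) (h : Chain O l₀ n α β) (hl₀ : 0 < l₀) {j k : ℕ}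
    (hjk : j ≤ k) (hk : k ≤ n) : β j ≤ β k := by
  induction k, hjk using Nat.le_induction with
  | base => rfl
  | succ k _ ih => exact (ih (by omega)).trans (h.beta_lt_beta_succ hO hl₀ hk).le

theorem restrict (h : Chain O l₀ n α β) {k : ℕ} (hkn : k ≤ n) : Chain O l₀ k α β where
  alpha_one := h.alpha_one
  beta_zero := h.beta_zero
  occ i hi hik := h.occ i hi (hik.trans hkn)
  overlap i hi hik := h.overlap i hi (hik.trans_le hkn)
  gap i hi hik := h.gap i hi (hik.trans_le hkn)
  one hk := h.lt_beta_one (by omega)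

theorem congr {O' : ℕ → ℕ → Prop} {e : ℕ} (h : Chain O l₀ n α β) (hβ : ∀ i ≤ n, β i ≤ e)
    (hOO' : ∀ x y, y ≤ e → (O x y ↔ O' x y)) : Chain O' l₀ n α β where
  alpha_one := h.alpha_one
  beta_zero := h.beta_zero
  occ i hi hin := (hOO' _ _ (hβ i hin)).mp (h.occ i hi hin)
  overlap := h.overlap
  gap i hi hin x y h₁ h₂ h₃ h₄ hO' :=
    h.gap i hi hin x y h₁ h₂ h₃ h₄ ((hOO' x y (h₄.trans (hβ _ hin))).mpr hO')
  one := h.one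

theorem congr_fun {α' β' : ℕ → ℕ} (h : Chain O l₀ n α β) (hn : 1 ≤ n)
    (hα : ∀ i, 1 ≤ i → i ≤ n → α' i = α i) (hβ : ∀ i ≤ n, β' i = β i) :
    Chain O l₀ n α' β' where
  alpha_one := (hα 1 le_rfl hn).trans h.alpha_one
  beta_zero := (hβ 0 (Nat.zero_le n)).trans h.beta_zero
  occ i hi hin := hα i hi hin ▸ hβ i hin ▸ h.occ i hi hin
  overlap i hi hin := by
    rw [hα (i + 1) (by omega) hin, hβ (i - 1) (by omega), hβ i hin.le]
    exact h.overlap i hi hin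
  gap i hi hin := by
    rw [hα (i + 1) (by omega) hin, hβ (i - 1) (by omega), hβ i hin.le, hβ (i + 1) hin]
    exact h.gap i hi hin
  one h₁ := hβ 1 (by omega) ▸ h.one h₁

theorem snoc (h : Chain O l₀ (n + 1) α β) {a b : ℕ} (hβa : β n ≤ a) (haβ : a < β (n + 1))
    (hab : O a b)
    (hgap : ∀ x y, β n ≤ x → x < a → β (n + 1) < y → y ≤ b → ¬ O x y) :
    Chain O l₀ (n + 2) (Function.update α (n + 2) a) (Function.update β (n + 2) b) := by
  have hα : ∀ i ≤ n + 1, Function.update α (n + 2) a i = α i :=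
    fun i hi => Function.update_of_ne (by omega) _ _
  have hβ : ∀ i ≤ n + 1, Function.update β (n + 2) b i = β i :=
    fun i hi => Function.update_of_ne (by omega) _ _
  refine ⟨by rw [hα 1 (by omega), h.alpha_one], by rw [hβ 0 (by omega), h.beta_zero],
    fun i hi hin => ?_, fun i hi hin => ?_, fun i hi hin => ?_, by omega⟩
  · rcases hin.lt_or_eq with hin | rfl
    · rw [hα i (by omega), hβ i (by omega)]; exact h.occ i hi (by omega)
    · simpa using hab
  · rw [hβ (i - 1) (by omega), hβ i (by omega)]
    rcases (Nat.lt_succ_iff.mp hin).lt_or_eq with hin | rfl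
    · rw [hα (i + 1) (by omega)]; exact h.overlap i hi hin
    · simpa using ⟨hβa, haβ⟩
  · rw [hβ (i - 1) (by omega), hβ i (by omega)]
    rcases (Nat.lt_succ_iff.mp hin).lt_or_eq with hin | rfl
    · rw [hα (i + 1) (by omega), hβ (i + 1) (by omega)]; exact h.gap i hi hin
    · simpa using hgap

theorem beta_succ_eq_of_le (hO : Nonnested O) (hl₀ : 0 < l₀) {k k' : ℕ} {α' β' : ℕ → ℕ}
    (h : Chain O l₀ k α β) (h' : Chain O l₀ k' α' β') {i : ℕ} (hi : 1 ≤ i) (hik : i < k)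
    (hik' : i < k') (hprev : β (i - 1) = β' (i - 1)) (hcur : β i = β' i)
    (hle : β (i + 1) ≤ β' (i + 1)) : β (i + 1) = β' (i + 1) := by
  have hocc := h.occ (i + 1) (by omega) hik
  have hocc' := h'.occ (i + 1) (by omega) hik'
  have hov := h.overlap i hi hik
  have hβ := h.beta_lt_beta_succ hO hl₀ hik
  rcases lt_trichotomy (α (i + 1)) (α' (i + 1)) with hα | hα | hα
  · exact absurd hocc (h'.gap i hi hik' _ _ (hprev ▸ hov.1) hα (hcur ▸ hβ) hle)
  · exact (hO hocc hocc' hα.ge hle).2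
  · exact absurd (hO hocc hocc' hα.le hle).1 hα.ne'

/-- Rigidity: each interval of a chain is forced by the two before it. -/
theorem beta_eq (hO : Nonnested O) (hl₀ : 0 < l₀) {k k' : ℕ} {α' β' : ℕ → ℕ}
    (h : Chain O l₀ k α β) (h' : Chain O l₀ k' α' β') {i : ℕ} (hik : i ≤ k) (hik' : i ≤ k') :
    β i = β' i := by
  have key : ∀ j, j + 1 ≤ k → j + 1 ≤ k' → β j = β' j ∧ β (j + 1) = β' (j + 1) := by
    intro j
    induction j with
    | zero =>
      intro hk hk'
      have hocc := h.occ 1 le_rfl hk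
      have hocc' := h'.occ 1 le_rfl hk'
      rw [h.alpha_one] at hocc
      rw [h'.alpha_one] at hocc'
      refine ⟨h.beta_zero.trans h'.beta_zero.symm, ?_⟩
      rcases le_total (β 1) (β' 1) with hle | hle
      · exact (hO hocc hocc' le_rfl hle).2
      · exact (hO hocc' hocc le_rfl hle).2.symm
    | succ j ih =>
      intro hk hk'
      obtain ⟨hprev, hcur⟩ := ih (by omega) (by omega)
      refine ⟨hcur, ?_⟩
      rcases le_total (β (j + 2)) (β' (j + 2)) with hle | hle
      · exact h.beta_succ_eq_of_le hO hl₀ h' (i := j + 1) (by omega) (by omega) (by omega)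
          hprev hcur hle
      · exact (h'.beta_succ_eq_of_le hO hl₀ h (i := j + 1) (by omega) (by omega) (by omega)
          hprev.symm hcur.symm hle).symm
  rcases Nat.eq_zero_or_pos i with rfl | hi
  · exact h.beta_zero.trans h'.beta_zero.symm
  · obtain ⟨j, rfl⟩ : ∃ j, i = j + 1 := ⟨i - 1, by omega⟩
    exact (key j hik hik').2

end Chain

/-- The sequence `α 1, β 0, α 2, β 1, …, α n, β (n - 1), β n, β n, …`: the boundaries in `v₀ w`
of the pieces `v₀, u₁, v₁, …, u_n, v_n` of the factorization attached to a chain. -/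
def bounds (n : ℕ) (α β : ℕ → ℕ) (k : ℕ) : ℕ :=
  if 2 * n ≤ k then β n else if k % 2 = 0 then α (k / 2 + 1) else β (k / 2)

section Bounds

variable {n : ℕ} {α β : ℕ → ℕ}

theorem bounds_two_mul {i : ℕ} (hi : i < n) : bounds n α β (2 * i) = α (i + 1) := by
  rw [bounds, if_neg (by omega), if_pos (by omega)]
  congr 2
  omega

theorem bounds_two_mul_add_one {i : ℕ} (hi : i ≤ n) : bounds n α β (2 * i + 1) = β i := by
  unfold bounds
  split_ifs with h₁ h₂
  · congr 1; omega
  · omega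
  · congr 1; omega

theorem bounds_of_le {k : ℕ} (hk : 2 * n ≤ k) : bounds n α β k = β n := by
  rw [bounds, if_pos hk]

theorem Chain.monotone_bounds {O : ℕ → ℕ → Prop} {l₀ : ℕ} (hO : Nonnested O)
    (h : Chain O l₀ n α β) (hl₀ : 0 < l₀) : Monotone (bounds n α β) := by
  refine monotone_nat_of_le_succ fun k => ?_
  by_cases hk : 2 * n ≤ k
  · rw [bounds_of_le hk, bounds_of_le (by omega)]
  obtain ⟨i, rfl | rfl⟩ : ∃ i, k = 2 * i ∨ k = 2 * i + 1 := ⟨k / 2, by omega⟩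
  · rw [bounds_two_mul (by omega), bounds_two_mul_add_one (by omega)]
    exact (h.alpha_succ_lt_beta hl₀ (by omega)).le
  · rw [bounds_two_mul_add_one (by omega)]
    by_cases hi : i + 1 < n
    · rw [show 2 * i + 1 + 1 = 2 * (i + 1) by omega, bounds_two_mul hi]
      simpa using (h.overlap (i + 1) (by omega) hi).1
    · rw [bounds_of_le (by omega)]
      exact h.beta_mono hO hl₀ (by omega) le_rfl

end Bounds

theorem exists_chain_iff_exists_bounds {O : ℕ → ℕ → Prop} {l₀ n M : ℕ} (hO : Nonnested O)
    (hl₀ : 0 < l₀) (hn : 1 ≤ n) :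
    (∃ α β : ℕ → ℕ, Chain O l₀ n α β ∧ β n = M) ↔
      ∃ b : ℕ → ℕ, Monotone b ∧ b (2 * n) = M ∧ b (2 * n + 1) = M ∧
        Chain O l₀ n (fun i => b (2 * i - 2)) (fun i => b (2 * i + 1)) := by
  constructor
  · rintro ⟨α, β, h, rfl⟩
    refine ⟨bounds n α β, h.monotone_bounds hO hl₀, bounds_of_le le_rfl,
      bounds_of_le (by omega), h.congr_fun hn (fun i hi hin => ?_)
        fun i hin => bounds_two_mul_add_one hin⟩
    rw [show 2 * i - 2 = 2 * (i - 1) by omega, bounds_two_mul (by omega), Nat.sub_add_cancel hi]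
  · rintro ⟨b, -, -, hM, h⟩
    exact ⟨_, _, h, hM⟩

def HasChain (S : Set (PathIn V)) (n : ℕ) (w v₀ : PathIn V) : Prop :=
  v₀.tgt = w.src ∧ ∃ α β : ℕ → ℕ,
    Chain (OccursAt S (v₀.comp w)) v₀.len n α β ∧ β n = (v₀.comp w).len

variable {S : Set (PathIn V)}

theorem hasChain_seg_iff (hred : Reduced S) {W v₀ : PathIn V} {n l e : ℕ} (hl : 0 < l)
    (hv₀ : v₀ = W.seg 0 l) (hle : l ≤ e) (he : e ≤ W.len) :
    HasChain S n (W.seg l e) v₀ ↔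
      ∃ α β : ℕ → ℕ, Chain (OccursAt S W) l n α β ∧ β n = e := by
  subst hv₀
  obtain ⟨h, hcomp⟩ := tgt_seg_eq_src_seg_and_comp (Nat.zero_le l) hle he
  have hlen₀ : (W.seg 0 l).len = l := len_seg (Nat.zero_le l) (hle.trans he)
  have hlen : (W.seg 0 e).len = e := len_seg (Nat.zero_le e) he
  have hocc : ∀ x y, y ≤ e → (OccursAt S (W.seg 0 e) x y ↔ OccursAt S W x y) := fun x y hy => by
    rw [occursAt_seg_zero_iff he]
    exact and_iff_right hy
  simp only [HasChain, hcomp, hlen₀, hlen, h, true_and]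
  refine exists₂_congr fun α β => ⟨fun ⟨hc, hβ⟩ => ⟨?_, hβ⟩, fun ⟨hc, hβ⟩ => ⟨?_, hβ⟩⟩
  · exact hc.congr (fun i hi => hβ ▸ hc.beta_mono (hred.nonnested_occursAt _) hl hi le_rfl) hocc
  · exact hc.congr (fun i hi => hβ ▸ hc.beta_mono (hred.nonnested_occursAt _) hl hi le_rfl)
      fun x y hy => (hocc x y hy).symm

theorem hasChain_of_mem_qOverlaps_add_two (hred : Reduced S) {m : ℕ} {w v₀ : PathIn V}
    (hv₀ : 0 < v₀.len)
    (ih₁ : ∀ w, (w, v₀) ∈ QOverlaps S (m + 1) → HasChain S (m + 1) w v₀)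
    (ih₀ : ∀ w, (w, v₀) ∈ QOverlaps S m → HasChain S m w v₀)
    (hmem : (w, v₀) ∈ QOverlaps S (m + 2)) : HasChain S (m + 2) w v₀ := by
  obtain ⟨w₁, hw₁, w₂, hw₂, hsv, hasv⟩ := hmem
  dsimp only at hsv hasv
  replace hw₁ := ih₁ w₁ hw₁
  replace hw₂ := ih₀ w₂ hw₂
  obtain ⟨u₁, hu₁, e₁, -⟩ := id hsv
  obtain ⟨u₂, hu₂, e₂, -⟩ := id hasv
  have hvw : v₀.tgt = w.src := by rw [e₁, src_comp hu₁]; exact hw₁.1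
  obtain ⟨he₁, hw₁W⟩ := eq_seg_of_eq_comp hw₁.1 hu₁ e₁
  obtain ⟨he₂, hw₂W⟩ := eq_seg_of_eq_comp hw₂.1 hu₂ e₂
  set W := v₀.comp w
  have hv₀W : v₀ = W.seg 0 v₀.len := eq_seg_of_eq_comp_left hvw rfl
  have hwW : w = W.seg v₀.len W.len := eq_seg_of_eq_comp_right hvw rfl
  have hO := hred.nonnested_occursAt W
  rw [hw₁W] at hw₁ hsv
  rw [hw₂W] at hw₂ hasv
  rw [hwW] at hsv hasv
  obtain ⟨α, β, ch, hβ⟩ := (hasChain_seg_iff hred hv₀ hv₀W (Nat.le_add_right _ _) he₁).mp hw₁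
  obtain ⟨α', β', ch', hβ'⟩ := (hasChain_seg_iff hred hv₀ hv₀W (Nat.le_add_right _ _) he₂).mp hw₂
  have hnone := (sVan_seg_iff (Nat.le_add_right _ _) he₁ le_rfl).mp hsv
  obtain ⟨⟨a, hβa, ha⟩, hend⟩ := (aSVan_seg_iff (Nat.le_add_right _ _) he₂).mp hasv
  -- by rigidity, the chain of `w₂` is the chain of `w₁` without its last interval
  have hβm : β m = v₀.len + w₂.len := (ch.beta_eq hO hv₀ ch' (by omega) le_rfl).trans hβ'
  have haβ : a < β (m + 1) := by
    by_contra hle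
    exact hnone a W.len (by omega) le_rfl ha
  refine ⟨hvw, _, _, ch.snoc (hβm ▸ hβa) haβ ha fun x y hx hxa _ _ hxy => ?_,
    Function.update_self _ _ _⟩
  obtain rfl := hend x y (hβm ▸ hx) hxy
  exact hxa.ne' (hO ha hxy hxa.le le_rfl).1

theorem mem_qOverlaps_add_two_of_hasChain (hred : Reduced S) {m : ℕ} {w v₀ : PathIn V}
    (hv₀ : 0 < v₀.len)
    (ih₁ : ∀ w, HasChain S (m + 1) w v₀ → (w, v₀) ∈ QOverlaps S (m + 1))
    (ih₀ : ∀ w, HasChain S m w v₀ → (w, v₀) ∈ QOverlaps S m)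
    (h : HasChain S (m + 2) w v₀) : (w, v₀) ∈ QOverlaps S (m + 2) := by
  obtain ⟨hvw, α, β, ch, hβ⟩ := h
  set W := v₀.comp w
  have hv₀W : v₀ = W.seg 0 v₀.len := eq_seg_of_eq_comp_left hvw rfl
  have hwW : w = W.seg v₀.len W.len := eq_seg_of_eq_comp_right hvw rfl
  have hO := hred.nonnested_occursAt W
  have hβm : v₀.len ≤ β m := ch.beta_zero ▸ ch.beta_mono hO hv₀ (Nat.zero_le m) (by omega)
  have hβm₁ := ch.beta_lt_beta_succ hO hv₀ (i := m) (by omega)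
  have hβM : β (m + 1) ≤ W.len := hβ ▸ ch.beta_mono hO hv₀ (Nat.le_succ _) le_rfl
  have hocc := ch.occ (m + 2) (by omega) le_rfl
  rw [hβ] at hocc
  have hov := ch.overlap (m + 1) (by omega) (by omega)
  rw [Nat.add_sub_cancel, show m + 1 + 1 = m + 2 from rfl] at hov
  have hw₁ := ih₁ _ ((hasChain_seg_iff hred hv₀ hv₀W (by omega) hβM).mpr
    ⟨α, β, ch.restrict (by omega), rfl⟩)
  have hw₀ := ih₀ _ ((hasChain_seg_iff hred hv₀ hv₀W hβm (by omega)).mpr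
    ⟨α, β, ch.restrict (by omega), rfl⟩)
  refine ⟨_, hw₁, _, hw₀, ?_, ?_⟩ <;> dsimp only <;> rw [hwW]
  · refine (sVan_seg_iff (by omega) hβM le_rfl).mpr fun x y hx hy hxy => ?_
    have := hO hxy hocc (by omega) hy
    omega
  · refine (aSVan_seg_iff hβm (by omega)).mpr ⟨⟨_, hov.1, hocc⟩, fun x y hx hxy => ?_⟩
    -- an occurrence starting after `β m` straddles, or lies in the last or the previous interval
    by_cases hy : β (m + 1) < y
    · by_cases hxα : x < α (m + 2)
      · exact absurd hxy (ch.gap (m + 1) (by omega) (by omega) x y (by simpa using hx) hxα hy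
          (hβ ▸ hxy.2.1))
      · exact (hO hxy hocc (by omega) hxy.2.1).2
    · have hα := ch.alpha_succ_lt_beta hv₀ (i := m) (by omega)
      have := hO hxy (ch.occ (m + 1) (by omega) (by omega)) (by omega) (by omega)
      omega

theorem mem_qOverlaps_zero_iff {w v₀ : PathIn V} (hv₀ : 0 < v₀.len) :
    (w, v₀) ∈ QOverlaps S 0 ↔ HasChain S 0 w v₀ := by
  simp only [QOverlaps, Set.mem_ofPred_eq, hv₀, true_and]
  constructor
  · rintro ⟨hw, hvw⟩
    refine ⟨hvw, fun _ => 0, fun _ => v₀.len, ⟨rfl, rfl, ?_, ?_, ?_, ?_⟩, ?_⟩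
      <;> try (intros; omega)
    simp [len_comp hvw, hw]
  · rintro ⟨hvw, α, β, ch, hβ⟩
    rw [ch.beta_zero, len_comp hvw] at hβ
    exact ⟨by omega, hvw⟩

theorem mem_qOverlaps_one_iff {w v₀ : PathIn V} (hv₀ : 0 < v₀.len) :
    (w, v₀) ∈ QOverlaps S 1 ↔ HasChain S 1 w v₀ := by
  simp only [QOverlaps, Set.mem_ofPred_eq, hv₀, true_and]
  constructor
  · rintro ⟨hw, hvw, hS⟩
    have hlen := len_comp hvw
    refine ⟨hvw, fun _ => 0, fun i => if i = 0 then v₀.len else (v₀.comp w).len,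
      ⟨rfl, rfl, fun i hi hi₁ => ?_, ?_, ?_, fun _ => by simp; omega⟩, rfl⟩
      <;> try (intros; omega)
    obtain rfl : i = 1 := by omega
    exact ⟨Nat.zero_le _, le_rfl, by rw [if_neg one_ne_zero, seg_zero_len]; exact hS⟩
  · rintro ⟨hvw, α, β, ch, hβ⟩
    have hocc := ch.occ 1 le_rfl le_rfl
    have hone := ch.one rfl
    rw [ch.alpha_one, hβ] at hocc
    rw [hβ, len_comp hvw] at hone
    exact ⟨by omega, hvw, seg_zero_len (v₀.comp w) ▸ hocc.2.2⟩

theorem mem_qOverlaps_iff_hasChain (hred : Reduced S) {v₀ : PathIn V} (hv₀ : 0 < v₀.len) :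
    ∀ (n : ℕ) (w : PathIn V), (w, v₀) ∈ QOverlaps S n ↔ HasChain S n w v₀
  | 0, _ => mem_qOverlaps_zero_iff hv₀
  | 1, _ => mem_qOverlaps_one_iff hv₀
  | _ + 2, _ =>
    ⟨hasChain_of_mem_qOverlaps_add_two hred hv₀
        (fun w => (mem_qOverlaps_iff_hasChain hred hv₀ _ w).mp)
        (fun w => (mem_qOverlaps_iff_hasChain hred hv₀ _ w).mp),
      mem_qOverlaps_add_two_of_hasChain hred hv₀
        (fun w => (mem_qOverlaps_iff_hasChain hred hv₀ _ w).mpr)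
        (fun w => (mem_qOverlaps_iff_hasChain hred hv₀ _ w).mpr)⟩

section Factorization

variable {W : PathIn V} {n : ℕ} {b : ℕ → ℕ} {q : ℕ → PathIn V}

theorem comp_comp_mem_iff_occursAt (hb : Monotone b) (hbW : b (2 * n + 1) ≤ W.len)
    (hq : ∀ k ≤ 2 * n, q k = W.seg (b k) (b (k + 1))) {i : ℕ} (hi : 1 ≤ i) (hin : i ≤ n) :
    (q (2 * i - 2)).comp ((q (2 * i - 1)).comp (q (2 * i))) ∈ S ↔
      OccursAt S W (b (2 * i - 2)) (b (2 * i + 1)) := by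
  have hbW' : b (2 * i + 1) ≤ W.len := (hb (by omega)).trans hbW
  rw [hq _ (by omega), hq _ (by omega), hq _ (by omega), show 2 * i - 2 + 1 = 2 * i - 1 by omega,
    show 2 * i - 1 + 1 = 2 * i by omega, seg_comp_seg (hb (by omega)) (hb (by omega)) hbW',
    seg_comp_seg (hb (by omega)) (hb (by omega)) hbW']
  exact ⟨fun h => ⟨hb (by omega), hbW', h⟩, fun h => h.2.2⟩

theorem exists_straddle_iff_of_eq_seg (hb : Monotone b) (hbW : b (2 * n + 1) ≤ W.len)
    (hq : ∀ k ≤ 2 * n, q k = W.seg (b k) (b (k + 1))) {i : ℕ} (hi : 1 ≤ i) (hin : i < n) :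
    (∃ uu vv : PathIn V, 0 < uu.len ∧ 0 < vv.len ∧
        vv.tgt = (q (2 * i)).src ∧ (q (2 * i)).tgt = uu.src ∧
        (vv.comp ((q (2 * i)).comp uu)) ∈ S ∧
        LDiv uu ((q (2 * i + 1)).comp (q (2 * i + 2))) ∧ RDiv vv (q (2 * i - 1))) ↔
      ∃ x y, b (2 * i - 1) ≤ x ∧ x < b (2 * i) ∧ b (2 * i + 1) < y ∧ y ≤ b (2 * i + 3) ∧
        OccursAt S W x y := by
  have hbW' : b (2 * i + 3) ≤ W.len := (hb (by omega)).trans hbW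
  rw [hq _ (by omega), hq _ (by omega), hq _ (by omega), hq _ (by omega),
    show 2 * i - 1 + 1 = 2 * i by omega, seg_comp_seg (hb (by omega)) (hb (by omega)) hbW']
  exact exists_straddle_iff (hb (by omega)) (hb (by omega)) (hb (by omega)) hbW'

theorem len_eq_sub_of_eq_seg (hb : Monotone b) (hbW : b (2 * n + 1) ≤ W.len)
    (hq : ∀ k ≤ 2 * n, q k = W.seg (b k) (b (k + 1))) {k : ℕ} (hk : k ≤ 2 * n) :
    (q k).len = b (k + 1) - b k := by
  rw [hq k hk, len_seg (hb k.le_succ) ((hb (show k + 1 ≤ 2 * n + 1 by omega)).trans hbW)]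

theorem chain_of_factorConds (hb : Monotone b) (hb₀ : b 0 = 0) (hbW : b (2 * n + 1) ≤ W.len)
    (hq : ∀ k ≤ 2 * n, q k = W.seg (b k) (b (k + 1))) (hfc : FactorConds S n q)
    (hone : n = 1 → 0 < (q 1).len) :
    b (2 * n) = b (2 * n + 1) ∧
      Chain (OccursAt S W) (b 1) n (fun i => b (2 * i - 2)) (fun i => b (2 * i + 1)) := by
  have hlen := fun k => len_eq_sub_of_eq_seg hb hbW hq (k := k)
  obtain ⟨-, hvert, hpos, hS, hstr⟩ := hfc
  rw [hlen _ le_rfl] at hvert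
  have hvert' : b (2 * n) = b (2 * n + 1) := le_antisymm (hb (by omega)) (by omega)
  refine ⟨hvert', hb₀, rfl, fun i hi hin => (comp_comp_mem_iff_occursAt hb hbW hq hi hin).mp
    (hS i hi hin), fun i hi hin => ?_, fun i hi hin x y h₁ h₂ h₃ h₄ hxy => ?_, fun hn => ?_⟩
  · have := hpos i hi (by omega)
    rw [hlen _ (by omega)] at this
    simp only [show 2 * (i - 1) + 1 = 2 * i - 1 by omega, show 2 * (i + 1) - 2 = 2 * i by omega]
    exact ⟨hb (by omega), by omega⟩
  · simp only [show 2 * (i - 1) + 1 = 2 * i - 1 by omega, show 2 * (i + 1) - 2 = 2 * i by omega,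
      show 2 * (i + 1) + 1 = 2 * i + 3 by omega] at h₁ h₂ h₄
    exact hstr i hi (by omega)
      ((exists_straddle_iff_of_eq_seg hb hbW hq hi hin).mpr ⟨x, y, h₁, h₂, h₃, h₄, hxy⟩)
  · subst hn
    have := hone rfl
    rw [hlen _ (by omega)] at this
    simp only [Nat.reduceMul, Nat.reduceAdd] at hvert' this ⊢
    omega

theorem factorConds_of_chain (hb : Monotone b) (hbW : b (2 * n + 1) ≤ W.len)
    (hq : ∀ k ≤ 2 * n, q k = W.seg (b k) (b (k + 1))) (hvert : b (2 * n) = b (2 * n + 1))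
    (ch : Chain (OccursAt S W) (b 1) n (fun i => b (2 * i - 2)) (fun i => b (2 * i + 1))) :
    FactorConds S n q ∧ (n = 1 → 0 < (q 1).len) := by
  have hlen := fun k => len_eq_sub_of_eq_seg hb hbW hq (k := k)
  refine ⟨⟨fun k hk => ?_, by rw [hlen _ le_rfl]; omega, fun i hi hin => ?_,
    fun i hi hin => (comp_comp_mem_iff_occursAt hb hbW hq hi hin).mpr (ch.occ i hi hin),
    fun i hi hin hex => ?_⟩, fun hn => ?_⟩
  · rw [hq k hk.le, hq (k + 1) hk]
    exact tgt_seg_eq_src_seg (hb k.le_succ) (hb (k + 1).le_succ)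
      ((hb (show k + 1 + 1 ≤ 2 * n + 1 by omega)).trans hbW)
  · have := (ch.overlap i hi (by omega)).2
    simp only [show 2 * (i + 1) - 2 = 2 * i by omega] at this
    rw [hlen _ (by omega)]
    omega
  · obtain ⟨x, y, h₁, h₂, h₃, h₄, hxy⟩ :=
      (exists_straddle_iff_of_eq_seg hb hbW hq hi (by omega)).mp hex
    have hidx : 2 * (i - 1) + 1 = 2 * i - 1 ∧ 2 * (i + 1) - 2 = 2 * i ∧
        2 * (i + 1) + 1 = 2 * i + 3 := by omega
    exact ch.gap i hi (by omega) x y (by simpa only [hidx]) (by simpa only [hidx]) h₃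
      (by simpa only [hidx]) hxy
  · subst hn
    have := ch.one rfl
    rw [hlen _ (by omega)]
    simp only [Nat.reduceMul, Nat.reduceAdd] at hvert this ⊢
    omega

end Factorization

theorem exists_factorization_iff {n : ℕ} (hn : 1 ≤ n) {w v₀ : PathIn V} :
    (∃ q : ℕ → PathIn V, q 0 = v₀ ∧ w = compSeq (fun m => q (m + 1)) (2 * n - 1) ∧
        FactorConds S n q ∧ (n = 1 → 0 < (q 1).len)) ↔
      v₀.tgt = w.src ∧ ∃ b : ℕ → ℕ, Monotone b ∧ b (2 * n) = (v₀.comp w).len ∧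
        b (2 * n + 1) = (v₀.comp w).len ∧
        Chain (OccursAt S (v₀.comp w)) v₀.len n (fun i => b (2 * i - 2))
          (fun i => b (2 * i + 1)) := by
  constructor
  · rintro ⟨q, rfl, rfl, hfc, hone⟩
    have hcomp := hfc.1
    have hW : (q 0).comp (compSeq (fun m => q (m + 1)) (2 * n - 1)) = compSeq q (2 * n) := by
      rw [← compSeq_succ (N := 2 * n - 1) fun k hk => hcomp k (by omega),
        Nat.sub_add_cancel (by omega)]
    have hsrc := (src_compSeq_and_tgt_compSeq (q := fun m => q (m + 1)) (N := 2 * n - 1)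
      fun k hk => hcomp (k + 1) (by omega)).1
    obtain ⟨hlen, hseg⟩ := eq_seg_compSeq hcomp
    rw [hW]
    have hb : Monotone fun k => ∑ j ∈ Finset.range k, (q j).len :=
      monotone_nat_of_le_succ fun k => by rw [Finset.sum_range_succ]; omega
    obtain ⟨hvert, ch⟩ := chain_of_factorConds hb rfl hlen.ge hseg hfc hone
    exact ⟨hsrc ▸ hcomp 0 (by omega), _, hb, hvert.trans hlen.symm, hlen.symm,
      by simpa using ch⟩
  · rintro ⟨hvw, b, hb, hb₂, hb₁, ch⟩
    have hb₀ : b 0 = 0 := ch.alpha_one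
    have hl₀ : b 1 = v₀.len := ch.beta_zero
    have hbW : b (2 * n + 1) ≤ (v₀.comp w).len := hb₁.le
    refine ⟨fun k => (v₀.comp w).seg (b k) (b (k + 1)), ?_, ?_,
      factorConds_of_chain hb hbW (fun k _ => rfl) (hb₂.trans hb₁.symm) (hl₀ ▸ ch)⟩
    · simp only [hb₀, hl₀]
      exact (eq_seg_of_eq_comp_left hvw rfl).symm
    · rw [compSeq_seg (b := fun k => b (k + 1)) (N := 2 * n - 1)
        (fun _ _ h => hb (Nat.succ_le_succ h))
        (by simpa only [show 2 * n - 1 + 1 + 1 = 2 * n + 1 by omega] using hbW)]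
      simp only [hl₀, show 2 * n - 1 + 1 + 1 = 2 * n + 1 by omega, hb₁]
      exact eq_seg_of_eq_comp_right hvw rfl

end PathIn

/-- characterization of `n`-quasioverlaps (`n ≥ 1`) by factorizations
`w = u₁ v₁ u₂ ⋯ u_{n-1} v_{n-1} u_n v_n` with `v₀` the second component of the pair. -/
theorem quasioverlap_iff_factorization {V : Type u} [Quiver.{v + 1} V]
    [Fintype V] [∀ a b : V, Fintype (a ⟶ b)]
    (S : Set (PathIn V)) (hS : ∀ p ∈ S, 2 ≤ p.len) (hred : PathIn.Reduced S)
    (n : ℕ) (hn : 1 ≤ n) (w v0 : PathIn V) (hv0 : 0 < v0.len) :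
    (w, v0) ∈ PathIn.QOverlaps S n ↔
      ∃ q : ℕ → PathIn V,
        -- the piece in position `0` is `v₀` itself
        q 0 = v0 ∧
        -- `w` is the composition `u₁ v₁ ⋯ u_n v_n` (not including `v₀`)
        w = PathIn.compSeq (fun m => q (m + 1)) (2 * n - 1) ∧
        PathIn.FactorConds S n q ∧
        -- condition (3): `u₁` has positive length if `n = 1`
        (n = 1 → 0 < (q 1).len) := by
  rw [PathIn.mem_qOverlaps_iff_hasChain hred hv0, PathIn.exists_factorization_iff hn,
    PathIn.HasChain, PathIn.exists_chain_iff_exists_bounds (hred.nonnested_occursAt _) hv0 hn]
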